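/- arXiv:0908.2596 — 11 statements merged into one kernel-verified Lean document; each statement's English description precedes it below -/
import Mathlib

section
/- Let G be a finite group with subgroup H and subset K ⊆ G. Then K is a transversal to every conjugate of H in G if and only if |K| = |G : H| and for every g ∈ G, H^g ∩ KK⁻¹ = {1}. -/
/-- `K` is a transversal to the subgroup `U` of `G`: every element of `G` lies in
`U * k` (i.e. in the right coset `U k`) for a unique `k ∈ K`. -/
def IsTransversal {G : Type*} [Group G] (U : Subgroup G) (K : Set G) : Prop :=
  ∀ g : G, ∃! k, k ∈ K ∧ ∃ h ∈ U, g = h * k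

/-!
`K` is a transversal to `U` exactly when `(u, k) ↦ u k` is a bijection `U × K → G`. Since
`u₁ k₁ = u₂ k₂` iff `u₂⁻¹ u₁ = k₂ k₁⁻¹`, this map is injective iff `U ∩ K K⁻¹ ⊆ {1}`, and for
finite `G` an injection is a bijection iff `|U| |K| = |G| = |U| |G : U|`. Conjugates of `H` all
have index `|G : H|`, so the cardinality condition does not depend on the conjugate.
-/

open Subgroup Pointwise

section Transversal

variable {G : Type*} [Group G]

theorem isTransversal_iff_isComplement (U : Subgroup G) (K : Set G) :
    IsTransversal U K ↔ IsComplement (U : Set G) K := by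
  rw [isComplement_iff_existsUnique]
  refine forall_congr' fun g => ⟨?_, ?_⟩
  · rintro ⟨k, ⟨hk, u, hu, rfl⟩, huniq⟩
    refine ⟨(⟨u, hu⟩, ⟨k, hk⟩), rfl, ?_⟩
    rintro ⟨⟨u', hu'⟩, ⟨k', hk'⟩⟩ (heq : u' * k' = u * k)
    obtain rfl : k' = k := huniq k' ⟨hk', u', hu', heq.symm⟩
    obtain rfl : u' = u := mul_right_cancel heq
    rfl
  · rintro ⟨⟨⟨u, hu⟩, ⟨k, hk⟩⟩, rfl, huniq⟩
    refine ⟨k, ⟨hk, u, hu, rfl⟩, ?_⟩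
    rintro k' ⟨hk', u', hu', heq⟩
    exact congrArg (fun p : ↥(U : Set G) × K => (p.2 : G))
      (huniq (⟨u', hu'⟩, ⟨k', hk'⟩) heq.symm)

theorem injective_mul_iff_inter_mul_inv_subset_one (U : Subgroup G) (K : Set G) :
    Function.Injective (fun p : ↥(U : Set G) × K => (p.1 : G) * p.2) ↔
      (U : Set G) ∩ (K * K⁻¹) ⊆ {1} := by
  constructor
  · rintro hinj u ⟨hu, k, hk, k', hk', rfl⟩
    have h : ((⟨_, hu⟩, ⟨k'⁻¹, hk'⟩) : ↥(U : Set G) × K) = (⟨1, U.one_mem⟩, ⟨k, hk⟩) :=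
      hinj (by simp)
    exact congrArg (fun p : ↥(U : Set G) × K => (p.1 : G)) h
  · rintro hsub ⟨⟨u₁, hu₁⟩, ⟨k₁, hk₁⟩⟩ ⟨⟨u₂, hu₂⟩, ⟨k₂, hk₂⟩⟩ (heq : u₁ * k₁ = u₂ * k₂)
    have hone : u₂⁻¹ * u₁ = 1 := hsub
      ⟨U.mul_mem (U.inv_mem hu₂) hu₁, k₂, hk₂, k₁⁻¹, by simpa using hk₁,
        by rw [eq_inv_mul_iff_mul_eq, ← mul_assoc, ← heq, mul_inv_cancel_right]⟩
    obtain rfl : u₁ = u₂ := (inv_mul_eq_one.mp hone).symm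
    obtain rfl : k₁ = k₂ := mul_left_cancel heq
    rfl

theorem isComplement_iff_ncard_eq_index_and_inter_mul_inv_eq_one [Finite G]
    (U : Subgroup G) (K : Set G) :
    IsComplement (U : Set G) K ↔ K.ncard = U.index ∧ (U : Set G) ∩ (K * K⁻¹) = {1} := by
  rw [IsComplement, Nat.bijective_iff_injective_and_card,
    injective_mul_iff_inter_mul_inv_subset_one, Nat.card_prod, SetLike.coe_sort_coe,
    Nat.card_coe_set_eq K, ← U.card_mul_index, Nat.mul_right_inj Nat.card_pos.ne']
  constructor
  · rintro ⟨hsub, hcard⟩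
    obtain ⟨k, hk⟩ : K.Nonempty :=
      Set.nonempty_of_ncard_ne_zero (hcard ▸ U.index_ne_zero_of_finite)
    have one_mem : (1 : G) ∈ (U : Set G) ∩ (K * K⁻¹) :=
      ⟨U.one_mem, k, hk, k⁻¹, by simpa using hk, mul_inv_cancel k⟩
    exact ⟨hcard, hsub.antisymm (Set.singleton_subset_iff.mpr one_mem)⟩
  · rintro ⟨hcard, hinter⟩
    exact ⟨hinter.subset, hcard⟩

end Transversal

/-- For a finite group `G`, a subgroup `H` and a subset `K`:
`K` is a transversal to every conjugate `H^g = g⁻¹ H g` of `H` if and only if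
`|K| = |G : H|` and `H^g ∩ K K⁻¹ = {1}` for all `g ∈ G`. -/
theorem transversal_iff_card_and_trivial_intersection
    {G : Type*} [Group G] [Fintype G] (H : Subgroup G) (K : Set G) :
    (∀ g : G, IsTransversal (H.map (MulAut.conj g⁻¹).toMonoidHom) K) ↔
      (K.ncard = H.index ∧
        ∀ g : G,
          {x : G | ∃ h ∈ H, x = g⁻¹ * h * g} ∩
            {x : G | ∃ k₁ ∈ K, ∃ k₂ ∈ K, x = k₁ * k₂⁻¹} = {1}) := by
  have conj_eq (g : G) :
      (H.map (MulAut.conj g⁻¹).toMonoidHom : Set G) = {x | ∃ h ∈ H, x = g⁻¹ * h * g} := by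
    ext x
    simp [eq_comm]
  have index_conj (g : G) : (H.map (MulAut.conj g⁻¹).toMonoidHom).index = H.index :=
    index_map_of_bijective (MulAut.conj g⁻¹).bijective H
  have mul_inv_eq : {x : G | ∃ k₁ ∈ K, ∃ k₂ ∈ K, x = k₁ * k₂⁻¹} = K * K⁻¹ := by
    ext x
    simp [Set.mem_mul, eq_comm]
  simp only [isTransversal_iff_isComplement,
    isComplement_iff_ncard_eq_index_and_inter_mul_inv_eq_one, index_conj, forall_and, forall_const]
  simp only [conj_eq, mul_inv_eq]
end

section
/- Let (G,H,K) be a loop folder (K is a transversal to every conjugate of H in G, and 1 ∈ K) and let U be a subgroup of G. Then U gives rise to a subfolder (U, U ∩ H, U ∩ K) if and only if U = (U ∩ H)(U ∩ K); in that case U ∩ K is a transversal to every conjugate in U of U ∩ H. -/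
/-!
Write `S = (U ∩ H) × (U ∩ K)` and `fᵤ(h, k) = u⁻¹ h u k`. Uniqueness in the ambient folder makes
every `fᵤ` injective on `H × K`, hence on `S`. If `U = (U ∩ H)(U ∩ K)` then `f₁` maps `S` onto `U`,
so `|S| = |U|`; for `u ∈ U` the injective map `fᵤ : S → U` is then onto as well, which gives
existence in the subfolder, and uniqueness is inherited from the ambient folder. Conversely, the
case `u = 1` of any subfolder `(U, V, W)` says `U = V W ⊆ (U ∩ H)(U ∩ K)`.
-/

open scoped Pointwise

/-- `(U, V, W)` is a loop folder inside the ambient group `G`: `V ≤ U`, `W ⊆ U`,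
`W` is a transversal to every `U`-conjugate of `V` in `U`, and `1 ∈ W`. -/
def IsLoopFolderIn {G : Type*} [Group G] (U V : Subgroup G) (W : Set G) : Prop :=
  V ≤ U ∧ W ⊆ (U : Set G) ∧ (1 : G) ∈ W ∧
    ∀ u ∈ U, ∀ g ∈ U, ∃! k, k ∈ W ∧ ∃ h ∈ V, g = u⁻¹ * h * u * k

section

open Set

variable {G : Type*} [Group G]

theorem Subgroup.conj_mul_mem (U : Subgroup G) {u a b : G} (hu : u ∈ U) (ha : a ∈ U)
    (hb : b ∈ U) : u⁻¹ * a * u * b ∈ U :=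
  U.mul_mem (U.mul_mem (U.mul_mem (U.inv_mem hu) ha) hu) hb

theorem IsLoopFolderIn.coe_eq_mul {U V : Subgroup G} {W : Set G} (hf : IsLoopFolderIn U V W) :
    (U : Set G) = V * W := by
  refine subset_antisymm (fun g hg => ?_) ?_
  · obtain ⟨k, ⟨hk, h, hh, rfl⟩, -⟩ := hf.2.2.2 1 U.one_mem g hg
    simpa using mul_mem_mul hh hk
  · exact (mul_subset_mul hf.1 hf.2.1).trans (Submonoid.coe_mul_self_eq U.toSubmonoid).le

theorem IsLoopFolderIn.injOn_conj_mul {U V : Subgroup G} {W : Set G} (hf : IsLoopFolderIn U V W)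
    {u : G} (hu : u ∈ U) :
    InjOn (fun p : G × G => u⁻¹ * p.1 * u * p.2) ((V : Set G) ×ˢ W) := by
  rintro ⟨a, b⟩ ⟨ha, hb⟩ ⟨a', b'⟩ ⟨ha', hb'⟩ h
  obtain rfl : b = b' := (hf.2.2.2 u hu _ (U.conj_mul_mem hu (hf.1 ha) (hf.2.1 hb))).unique
    ⟨hb, a, ha, rfl⟩ ⟨hb', a', ha', h⟩
  simpa using h

theorem isLoopFolderIn_inf_of_coe_eq_mul {H : Subgroup G} {K : Set G}
    (hf : IsLoopFolderIn ⊤ H K) {U : Subgroup G} (hU : (U : Set G).Finite)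
    (hUHK : (U : Set G) = ((U : Set G) ∩ H) * ((U : Set G) ∩ K)) :
    IsLoopFolderIn U (U ⊓ H) ((U : Set G) ∩ K) := by
  set S := ((U : Set G) ∩ H) ×ˢ ((U : Set G) ∩ K)
  have hinj (u : G) : InjOn (fun p : G × G => u⁻¹ * p.1 * u * p.2) S :=
    (hf.injOn_conj_mul trivial).mono (prod_mono inter_subset_right inter_subset_right)
  have hcard : S.ncard = (U : Set G).ncard := by
    rw [hUHK, ← image_mul_prod, (by simpa using hinj 1 : InjOn _ _).ncard_image]
  have himage {u : G} (hu : u ∈ U) : (fun p : G × G => u⁻¹ * p.1 * u * p.2) '' S = U := by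
    refine eq_of_subset_of_ncard_le ?_ (by rw [(hinj u).ncard_image, hcard]) hU
    rintro _ ⟨⟨a, b⟩, ⟨⟨haU, -⟩, hbU, -⟩, rfl⟩
    exact U.conj_mul_mem hu haU hbU
  refine ⟨inf_le_left, inter_subset_left, ⟨U.one_mem, hf.2.2.1⟩, fun u hu g hg => ?_⟩
  rw [← SetLike.mem_coe, ← himage hu] at hg
  obtain ⟨⟨a, b⟩, ⟨ha, hb⟩, rfl⟩ := hg
  refine ⟨b, ⟨hb, a, ha, rfl⟩, fun k ⟨hk, h, hh, hgk⟩ => ?_⟩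
  exact (hf.2.2.2 u trivial _ trivial).unique ⟨hk.2, h, hh.2, hgk⟩ ⟨hb.2, a, ha.2, rfl⟩

end

/-- Let `(G,H,K)` be a loop folder and `U ≤ G`. Then `U` gives rise
to a subfolder `(U, V, W)` (with `V ≤ U ∩ H` and `W ⊆ U ∩ K`) if and only if
`U = (U ∩ H)(U ∩ K)`; in that case one may take `V = U ∩ H` and `W = U ∩ K`,
i.e. `(U, U ∩ H, U ∩ K)` is a loop folder. -/
theorem subfolder_iff_factorization {G : Type*} [Group G] [Finite G]
    (H : Subgroup G) (K : Set G)
    (hfolder : IsLoopFolderIn (⊤ : Subgroup G) H K)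
    (U : Subgroup G) :
    ((∃ (V : Subgroup G) (W : Set G),
        V ≤ U ⊓ H ∧ W ⊆ (U : Set G) ∩ K ∧ IsLoopFolderIn U V W) ↔
      (U : Set G) = ((U : Set G) ∩ (H : Set G)) * ((U : Set G) ∩ K)) ∧
    ((U : Set G) = ((U : Set G) ∩ (H : Set G)) * ((U : Set G) ∩ K) →
      IsLoopFolderIn U (U ⊓ H) ((U : Set G) ∩ K)) := by
  have hsub := isLoopFolderIn_inf_of_coe_eq_mul hfolder (Set.toFinite (U : Set G))
  refine ⟨⟨?_, fun hUHK => ⟨_, _, le_rfl, Set.Subset.rfl, hsub hUHK⟩⟩, hsub⟩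
  rintro ⟨V, W, hV, hW, hVW⟩
  refine Set.Subset.antisymm ?_ ?_
  · calc (U : Set G) = V * W := hVW.coe_eq_mul
      _ ⊆ _ := Set.mul_subset_mul (fun _ hx => hV hx) hW
  · exact (Set.mul_subset_mul Set.inter_subset_left Set.inter_subset_left).trans
      (Submonoid.coe_mul_self_eq U.toSubmonoid).le
end

section
/- Let (G,H,K) be a loop folder and U a subgroup of G containing H or containing K. Then (U, U ∩ H, U ∩ K) is a subfolder, i.e., U = (U ∩ H)(U ∩ K). -/
open scoped Pointwise

/-- `(G, H, K)` is a loop folder: `K` is a transversal to every conjugate of the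
subgroup `H` in `G`, and `1 ∈ K`. -/
def IsLoopFolder {G : Type*} [Group G] (H : Subgroup G) (K : Set G) : Prop :=
  (1 : G) ∈ K ∧ ∀ u g : G, ∃! k, k ∈ K ∧ ∃ h ∈ H, g = u⁻¹ * h * u * k

theorem IsLoopFolder.univ_subset_mul {G : Type*} [Group G] {H : Subgroup G} {K : Set G}
    (hfolder : IsLoopFolder H K) : Set.univ ⊆ (H : Set G) * K := by
  intro g _
  obtain ⟨k, ⟨hk, h, hh, rfl⟩, -⟩ := hfolder.2 1 g
  exact ⟨h, hh, k, hk, by group⟩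

theorem Subgroup.coe_eq_inter_mul_inter {G : Type*} [Group G] {A B : Set G} (U : Subgroup G)
    (hAB : (U : Set G) ⊆ A * B) (hU : A ⊆ U ∨ B ⊆ U) :
    (U : Set G) = ((U : Set G) ∩ A) * ((U : Set G) ∩ B) := by
  refine subset_antisymm (fun u hu => ?_) (Set.mul_subset_iff.2 fun a ha b hb => U.mul_mem ha.1 hb.1)
  obtain ⟨a, ha, b, hb, rfl⟩ := hAB hu
  have hmem : a ∈ U ∧ b ∈ U := by
    rcases hU with hA | hB
    · exact ⟨hA ha, (U.mul_mem_cancel_left (hA ha)).1 hu⟩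
    · exact ⟨(U.mul_mem_cancel_right (hB hb)).1 hu, hB hb⟩
  exact ⟨a, ⟨hmem.1, ha⟩, b, ⟨hmem.2, hb⟩, rfl⟩

theorem overgroup_factorization_general {G : Type*} [Group G]
    (H : Subgroup G) (K : Set G) (hfolder : IsLoopFolder H K)
    (U : Subgroup G) (hU : H ≤ U ∨ K ⊆ (U : Set G)) :
    (U : Set G) = ((U : Set G) ∩ (H : Set G)) * ((U : Set G) ∩ K) :=
  U.coe_eq_inter_mul_inter ((Set.subset_univ _).trans hfolder.univ_subset_mul) hU

/-- If `(G,H,K)` is a loop folder and `U` is a subgroup of `G`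
containing `H` or containing `K`, then `(U, U ∩ H, U ∩ K)` is a subfolder,
i.e. `U = (U ∩ H)(U ∩ K)`. -/
theorem overgroup_factorization {G : Type*} [Group G] [Finite G]
    (H : Subgroup G) (K : Set G) (hfolder : IsLoopFolder H K)
    (U : Subgroup G) (hU : H ≤ U ∨ K ⊆ (U : Set G)) :
    (U : Set G) = ((U : Set G) ∩ (H : Set G)) * ((U : Set G) ∩ K) :=
  overgroup_factorization_general H K hfolder U hU
end

section
/- Let G be a finite group generated by a twisted subgroup K, with relation ≡ defined by R_0 = {(1,1)}, R_{i+1} = {(kx, k⁻¹y) : (x,y) ∈ R_i, k ∈ K}. If g ≡ h then gK = Kh. Consequently the set of left cosets {gK : g ∈ G} equals the set of right cosets {Kg : g ∈ G}. -/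
open scoped Pointwise

/-- A subset `K` of a group is a twisted subgroup if `1 ∈ K`, `x⁻¹ ∈ K` for all
`x ∈ K`, and `x*y*x ∈ K` for all `x, y ∈ K`. -/
def IsTwistedSubgroup {G : Type*} [Group G] (K : Set G) : Prop :=
  (1 : G) ∈ K ∧ (∀ x ∈ K, x⁻¹ ∈ K) ∧ (∀ x ∈ K, ∀ y ∈ K, x * y * x ∈ K)

/-- The relation `≡` determined by `K`: `g ≡ h` iff there are `k₁, …, kₙ ∈ K`
with `g = k₁ k₂ ⋯ kₙ` and `h = k₁⁻¹ k₂⁻¹ ⋯ kₙ⁻¹`. -/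
def TwistedEquiv {G : Type*} [Group G] (K : Set G) (g h : G) : Prop :=
  ∃ l : List G, (∀ x ∈ l, x ∈ K) ∧ g = l.prod ∧ h = (l.map (·⁻¹)).prod

/-!
For `k ∈ K` the twisted-subgroup axiom `k y k ∈ K` gives `kK = K k⁻¹`; peeling off one factor at a
time then yields `k₁ ⋯ kₙ K = K k₁⁻¹ ⋯ kₙ⁻¹`. Since `K = K⁻¹` generates `G`, every `g` is such a
product, so every left coset is a right coset, and symmetrically (replace each `kᵢ` by `kᵢ⁻¹`).
-/

section

variable {G : Type*} [Group G] {K : Set G}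

theorem IsTwistedSubgroup.singleton_mul_eq_mul_singleton_inv (hK : IsTwistedSubgroup K) {k : G}
    (hk : k ∈ K) : ({k} : Set G) * K = K * {k⁻¹} := by
  ext x
  simp only [Set.mem_mul, Set.mem_singleton_iff]
  constructor
  · rintro ⟨a, rfl, y, hy, rfl⟩
    exact ⟨a * y * a, hK.2.2 a hk y hy, a⁻¹, rfl, by group⟩
  · rintro ⟨y, hy, _, rfl, rfl⟩
    exact ⟨k, rfl, k⁻¹ * y * k⁻¹, hK.2.2 k⁻¹ (hK.2.1 k hk) y hy, by group⟩

namespace TwistedEquiv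

theorem cons {g h k : G} (hk : k ∈ K) (hgh : TwistedEquiv K g h) :
    TwistedEquiv K (k * g) (k⁻¹ * h) := by
  obtain ⟨l, hl, rfl, rfl⟩ := hgh
  exact ⟨k :: l, List.forall_mem_cons.2 ⟨hk, hl⟩, List.prod_cons.symm, by simp⟩

theorem symm (hK : IsTwistedSubgroup K) {g h : G} (hgh : TwistedEquiv K g h) :
    TwistedEquiv K h g := by
  obtain ⟨l, hl, rfl, rfl⟩ := hgh
  refine ⟨l.map (·⁻¹), fun x hx => ?_, rfl, by simp⟩
  obtain ⟨y, hy, rfl⟩ := List.mem_map.1 hx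
  exact hK.2.1 y (hl y hy)

theorem singleton_mul_eq_mul_singleton (hK : IsTwistedSubgroup K) {g h : G}
    (hgh : TwistedEquiv K g h) : ({g} : Set G) * K = K * {h} := by
  obtain ⟨l, hl, rfl, rfl⟩ := hgh
  induction l with
  | nil => simp
  | cons k l ih =>
    obtain ⟨hk, hl⟩ := List.forall_mem_cons.1 hl
    calc ({(k :: l).prod} : Set G) * K = {k} * ({l.prod} * K) := by
          rw [List.prod_cons, ← Set.singleton_mul_singleton, mul_assoc]
      _ = {k} * K * {(l.map (·⁻¹)).prod} := by rw [ih hl, mul_assoc]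
      _ = K * {((k :: l).map (·⁻¹)).prod} := by
          rw [hK.singleton_mul_eq_mul_singleton_inv hk, mul_assoc, Set.singleton_mul_singleton,
            List.map_cons, List.prod_cons]

theorem exists_of_closure_eq_top (hK : IsTwistedSubgroup K) (hgen : Subgroup.closure K = ⊤)
    (g : G) : ∃ h, TwistedEquiv K g h := by
  have hg : g ∈ Subgroup.closure K := hgen ▸ Subgroup.mem_top g
  induction hg using Subgroup.closure_induction_left with
  | one => exact ⟨1, [], by simp⟩
  | mul_left k hk _ _ ih =>
    obtain ⟨_, hgh⟩ := ih
    exact ⟨_, hgh.cons hk⟩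
  | inv_mul_cancel k hk _ _ ih =>
    obtain ⟨_, hgh⟩ := ih
    exact ⟨_, hgh.cons (hK.2.1 k hk)⟩

end TwistedEquiv

end

theorem twistedEquiv_coset_general {G : Type*} [Group G]
    (K : Set G) (hK : IsTwistedSubgroup K)
    (hgen : Subgroup.closure K = ⊤) :
    (∀ g h : G, TwistedEquiv K g h → ({g} : Set G) * K = K * {h}) ∧
      {S : Set G | ∃ g : G, S = ({g} : Set G) * K} =
        {S : Set G | ∃ g : G, S = K * ({g} : Set G)} := by
  have coset_eq := fun g h (hgh : TwistedEquiv K g h) => hgh.singleton_mul_eq_mul_singleton hK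
  refine ⟨coset_eq, Set.ext fun S => ⟨?_, ?_⟩⟩
  · rintro ⟨g, rfl⟩
    obtain ⟨h, hgh⟩ := TwistedEquiv.exists_of_closure_eq_top hK hgen g
    exact ⟨h, coset_eq g h hgh⟩
  · rintro ⟨h, rfl⟩
    obtain ⟨g, hhg⟩ := TwistedEquiv.exists_of_closure_eq_top hK hgen h
    exact ⟨g, (coset_eq g h (hhg.symm hK)).symm⟩

/-- If `G` is a finite group generated by a twisted subgroup `K`,
then `g ≡ h` implies `gK = Kh`; consequently the set of left cosets
`{gK : g ∈ G}` equals the set of right cosets `{Kg : g ∈ G}`. -/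
theorem twistedEquiv_coset {G : Type*} [Group G] [Finite G]
    (K : Set G) (hK : IsTwistedSubgroup K)
    (hgen : Subgroup.closure K = ⊤) :
    (∀ g h : G, TwistedEquiv K g h → ({g} : Set G) * K = K * {h}) ∧
      {S : Set G | ∃ g : G, S = ({g} : Set G) * K} =
        {S : Set G | ∃ g : G, S = K * ({g} : Set G)} :=
  twistedEquiv_coset_general K hK hgen
end

section
/- Let G be a finite group generated by a twisted subgroup K. Then Ξ_K(G) := {g ∈ G : g ≡ 1} is a normal subgroup of G, and Ψ_K(G) := {g ∈ G : gK = K} is a normal subgroup of G containing Ξ_K(G). Moreover Ψ_K(G)K = K = KΨ_K(G) and Ψ_K(G) ⊆ K. -/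
/-!
The pairs `(g, h)` with `g ≡ h` form a subgroup of `G × G` (when `K = K⁻¹`), and `Ξ_K(G)` is its
slice at `h = 1`; it is normalised by `K` because `(k, k⁻¹) (g, 1) (k, k⁻¹)⁻¹ = (k g k⁻¹, 1)`.
`Ψ_K(G)` is the stabiliser of `K` under left translation. Iterating the axiom `x y x ∈ K` shows
`g m h⁻¹ ∈ K` whenever `g ≡ h` and `m ∈ K`, whence `Ξ_K(G) K ⊆ K`; and
`k g k⁻¹ m = k (g (k⁻¹ m k⁻¹)) k` shows that `K` normalises `Ψ_K(G)`. As `K` is symmetric and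
generates `G`, both subgroups are normal.
-/

open scoped Pointwise

section

variable {G : Type*} [Group G]

theorem Subgroup.normal_of_conj_mem_of_closure_eq_top {S : Set G} (hS : closure S = ⊤)
    (hS_inv : ∀ s ∈ S, s⁻¹ ∈ S) (H : Subgroup G) (hconj : ∀ s ∈ S, ∀ h ∈ H, s * h * s⁻¹ ∈ H) :
    H.Normal := by
  rw [← normalizer_eq_top_iff, eq_top_iff, ← hS, closure_le]
  refine fun s hs h ↦ ⟨hconj s hs h, fun hh ↦ ?_⟩
  simpa [mul_assoc] using hconj s⁻¹ (hS_inv s hs) _ hh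

theorem MulAction.mem_stabilizer_of_smul_set_subset {α : Type*} [MulAction G α] {a : G}
    {s : Set α} (h : a • s ⊆ s) (h_inv : a⁻¹ • s ⊆ s) : a ∈ stabilizer G s :=
  mem_stabilizer_iff.2 <| h.antisymm <| Set.subset_smul_set_iff.2 h_inv

namespace TwistedEquiv

variable {K : Set G} {g h g' h' : G}

theorem one_one : TwistedEquiv K 1 1 := ⟨[], by simp, by simp, by simp⟩

theorem of_mem {k : G} (hk : k ∈ K) : TwistedEquiv K k k⁻¹ := ⟨[k], by simpa, by simp, by simp⟩

theorem mul (h₁ : TwistedEquiv K g h) (h₂ : TwistedEquiv K g' h') :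
    TwistedEquiv K (g * g') (h * h') := by
  obtain ⟨l, hl, rfl, rfl⟩ := h₁
  obtain ⟨l', hl', rfl, rfl⟩ := h₂
  exact ⟨l ++ l', by simp_all [or_imp], by simp, by simp⟩

theorem inv (hK : ∀ x ∈ K, x⁻¹ ∈ K) (h₁ : TwistedEquiv K g h) : TwistedEquiv K g⁻¹ h⁻¹ := by
  obtain ⟨l, hl, rfl, rfl⟩ := h₁
  refine ⟨(l.map (·⁻¹)).reverse, by simpa using fun x hx ↦ by simpa using hK _ (hl _ hx), ?_, ?_⟩
  · exact List.prod_inv_reverse l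
  · rw [List.prod_inv_reverse, List.map_reverse]

end TwistedEquiv

def twistedEquivSubgroup (K : Set G) (hK : ∀ x ∈ K, x⁻¹ ∈ K) : Subgroup (G × G) where
  carrier := {p | TwistedEquiv K p.1 p.2}
  one_mem' := TwistedEquiv.one_one
  mul_mem' := TwistedEquiv.mul
  inv_mem' := TwistedEquiv.inv hK

namespace IsTwistedSubgroup

variable {K : Set G}

theorem one_mem (hK : IsTwistedSubgroup K) : (1 : G) ∈ K := hK.1

theorem inv_mem (hK : IsTwistedSubgroup K) {x : G} (hx : x ∈ K) : x⁻¹ ∈ K := hK.2.1 x hx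

theorem mul_mul_mem (hK : IsTwistedSubgroup K) {x y : G} (hx : x ∈ K) (hy : y ∈ K) :
    x * y * x ∈ K :=
  hK.2.2 x hx y hy

theorem inv_eq_self (hK : IsTwistedSubgroup K) : K⁻¹ = K :=
  Set.inv_eq_self_iff_inv_subset.2 fun _ hx ↦ by simpa using hK.inv_mem hx

theorem mul_mul_inv_mem_of_twistedEquiv (hK : IsTwistedSubgroup K) {g h m : G}
    (hgh : TwistedEquiv K g h) (hm : m ∈ K) : g * m * h⁻¹ ∈ K := by
  obtain ⟨l, hl, rfl, rfl⟩ := hgh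
  induction l with
  | nil => simpa using hm
  | cons a l ih =>
    simp only [List.forall_mem_cons] at hl
    simpa [mul_assoc] using hK.mul_mul_mem hl.1 (ih hl.2)

theorem smul_subset_of_twistedEquiv_one (hK : IsTwistedSubgroup K) {g : G}
    (hg : TwistedEquiv K g 1) : g • K ⊆ K := by
  rintro _ ⟨m, hm, rfl⟩
  simpa using hK.mul_mul_inv_mem_of_twistedEquiv hg hm

theorem conj_smul_subset (hK : IsTwistedSubgroup K) {k g : G} (hk : k ∈ K) (hg : g • K ⊆ K) :
    (k * g * k⁻¹) • K ⊆ K := by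
  rintro _ ⟨m, hm, rfl⟩
  have := hK.mul_mul_mem hk (hg (Set.smul_mem_smul_set (hK.mul_mul_mem (hK.inv_mem hk) hm)))
  simpa [mul_assoc] using this

end IsTwistedSubgroup

end

theorem xi_psi_normal_general {G : Type*} [Group G]
    (K : Set G) (hK : IsTwistedSubgroup K)
    (hgen : Subgroup.closure K = ⊤) :
    ∃ Xi Psi : Subgroup G,
      Xi.Normal ∧ (Xi : Set G) = {g : G | TwistedEquiv K g 1} ∧
      Psi.Normal ∧ (Psi : Set G) = {g : G | ({g} : Set G) * K = K} ∧
      Xi ≤ Psi ∧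
      (Psi : Set G) * K = K ∧ K * (Psi : Set G) = K ∧
      (Psi : Set G) ⊆ K := by
  have hK_inv : ∀ x ∈ K, x⁻¹ ∈ K := fun _ ↦ hK.inv_mem
  set Xi := (twistedEquivSubgroup K hK_inv).comap (MonoidHom.inl G G)
  set Psi := MulAction.stabilizer G K
  refine ⟨Xi, Psi, ?_, rfl, ?_, ?_, ?_, MulAction.stabilizer_mul_self K, ?_, ?_⟩
  · refine Subgroup.normal_of_conj_mem_of_closure_eq_top hgen hK_inv Xi fun k hk g hg ↦ ?_
    show TwistedEquiv K (k * g * k⁻¹) 1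
    simpa using ((TwistedEquiv.of_mem hk).mul hg).mul ((TwistedEquiv.of_mem hk).inv hK_inv)
  · refine Subgroup.normal_of_conj_mem_of_closure_eq_top hgen hK_inv Psi fun k hk g hg ↦ ?_
    refine MulAction.mem_stabilizer_of_smul_set_subset
      (hK.conj_smul_subset hk (MulAction.mem_stabilizer_iff.1 hg).subset) ?_
    simpa [mul_assoc] using
      hK.conj_smul_subset hk (MulAction.mem_stabilizer_iff.1 (Psi.inv_mem hg)).subset
  · ext g
    show g • K = K ↔ ({g} : Set G) • K = K
    rw [Set.singleton_smul]
  · exact fun g hg ↦ MulAction.mem_stabilizer_of_smul_set_subset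
      (hK.smul_subset_of_twistedEquiv_one hg) (hK.smul_subset_of_twistedEquiv_one (Xi.inv_mem hg))
  · conv_lhs => rw [← hK.inv_eq_self, ← inv_coe_set (H := Psi)]
    rw [← mul_inv_rev, MulAction.stabilizer_mul_self, hK.inv_eq_self]
  · exact fun g hg ↦ by simpa using (MulAction.mem_stabilizer_set.1 hg 1).2 hK.one_mem

/-- For a finite group `G` generated by a twisted subgroup `K`,
`Ξ_K(G) = {g : g ≡ 1}` is a normal subgroup, `Ψ_K(G) = {g : gK = K}` is a
normal subgroup containing `Ξ_K(G)`, `Ψ_K(G)K = K = KΨ_K(G)`, and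
`Ψ_K(G) ⊆ K`. -/
theorem xi_psi_normal {G : Type*} [Group G] [Finite G]
    (K : Set G) (hK : IsTwistedSubgroup K)
    (hgen : Subgroup.closure K = ⊤) :
    ∃ Xi Psi : Subgroup G,
      Xi.Normal ∧ (Xi : Set G) = {g : G | TwistedEquiv K g 1} ∧
      Psi.Normal ∧ (Psi : Set G) = {g : G | ({g} : Set G) * K = K} ∧
      Xi ≤ Psi ∧
      (Psi : Set G) * K = K ∧ K * (Psi : Set G) = K ∧
      (Psi : Set G) ⊆ K :=
  xi_psi_normal_general K hK hgen
end

section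
/- Let K be a twisted subgroup of a finite group G with G = ⟨K⟩, and suppose there exists an automorphism σ of G with k^σ = k⁻¹ for all k ∈ K. Then Ξ_K(G) = {g ∈ G : g ≡ 1} is trivial. -/
/-! A homomorphism inverting every element of `K` sends `k₁ ⋯ kₙ` to `k₁⁻¹ ⋯ kₙ⁻¹`, so it
maps each `g` to every `h` with `g ≡ h`; for `h = 1` an injective one forces `g = 1`. -/

theorem TwistedEquiv.one_one_s10 {G : Type*} [Group G] (K : Set G) : TwistedEquiv K 1 1 :=
  ⟨[], by simp, by simp, by simp⟩

theorem TwistedEquiv.map_eq_of_inverts {G : Type*} [Group G] {K : Set G} {g h : G}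
    (hgh : TwistedEquiv K g h) (f : G →* G) (hf : ∀ k ∈ K, f k = k⁻¹) : f g = h := by
  obtain ⟨l, hl, rfl, rfl⟩ := hgh
  rw [map_list_prod, List.map_congr_left fun k hk => hf k (hl k hk)]

theorem TwistedEquiv.eq_one_of_inverts {G : Type*} [Group G] {K : Set G} {g : G}
    (hg : TwistedEquiv K g 1) (σ : G ≃* G) (hσ : ∀ k ∈ K, σ k = k⁻¹) : g = 1 :=
  σ.injective <| (hg.map_eq_of_inverts σ.toMonoidHom hσ).trans (map_one σ).symm

theorem xi_trivial_of_inverting_automorphism_general {G : Type*} [Group G]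
    (K : Set G)
    (σ : G ≃* G) (hσ : ∀ k ∈ K, σ k = k⁻¹) :
    {g : G | TwistedEquiv K g 1} = {1} := by
  ext g
  constructor
  · exact fun hg => hg.eq_one_of_inverts σ hσ
  · rintro rfl
    exact TwistedEquiv.one_one_s10 K

/-- If `K` is a twisted subgroup generating the finite group `G`
and some automorphism `σ` of `G` inverts every element of `K`, then
`Ξ_K(G) = {g : g ≡ 1}` is trivial. -/
theorem xi_trivial_of_inverting_automorphism {G : Type*} [Group G] [Finite G]
    (K : Set G) (hK : IsTwistedSubgroup K)
    (hgen : Subgroup.closure K = ⊤)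
    (σ : G ≃* G) (hσ : ∀ k ∈ K, σ k = k⁻¹) :
    {g : G | TwistedEquiv K g 1} = {1} :=
  xi_trivial_of_inverting_automorphism_general K σ hσ
end

section
/- Let G be a finite group, τ an automorphism of G with τ² = 1, and K ⊆ G with 1 ∈ K, k^τ = k⁻¹ for all k ∈ K, and ⟨K⟩ = G. Form the semidirect product G⟨τ⟩ and set Λ = τK. If Λ is invariant under conjugation by G, then K is a twisted subgroup of G. -/
/-!
Conjugating `t * y ∈ Λ` by `x ∈ K` gives `t * (x * y * x)`, because `t` inverts `x`; so
invariance of `Λ` makes `K` closed under `(x, y) ↦ x * y * x`. Starting from `1` and `x`, this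
closure operation produces every power of `x`, and `x⁻¹` is one of them since `x` has finite order.
-/

section PowerClosure

variable {G : Type*} [Group G] {K : Set G}

theorem pow_mem_of_mul_mul_mem (h1 : (1 : G) ∈ K)
    (hmul : ∀ x ∈ K, ∀ y ∈ K, x * y * x ∈ K) {x : G} (hx : x ∈ K) (n : ℕ) : x ^ n ∈ K := by
  induction n using Nat.twoStepInduction with
  | zero => simpa using h1
  | one => simpa using hx
  | more n hn _ =>
    have hxnx := hmul x hx _ hn
    rwa [mul_assoc, ← pow_succ, ← pow_succ'] at hxnx

theorem inv_mem_of_mul_mul_mem (h1 : (1 : G) ∈ K)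
    (hmul : ∀ x ∈ K, ∀ y ∈ K, x * y * x ∈ K) {x : G} (hx : x ∈ K) (hfin : IsOfFinOrder x) :
    x⁻¹ ∈ K := by
  obtain ⟨n, hn⟩ : x⁻¹ ∈ Submonoid.powers x :=
    hfin.mem_powers_iff_mem_zpowers.mpr (Subgroup.inv_mem _ (Subgroup.mem_zpowers x))
  exact hn ▸ pow_mem_of_mul_mul_mem h1 hmul hx n

end PowerClosure

theorem inv_mul_mul_mul_eq_of_mul_mul_inv_eq_inv {P : Type*} [Group P] {t x : P}
    (h : t * x * t⁻¹ = x⁻¹) (y : P) : x⁻¹ * (t * y) * x = t * (x * y * x) := by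
  have hxt : x⁻¹ * t = t * x := by rw [← h]; group
  rw [← mul_assoc, hxt]
  group

theorem twisted_of_lambda_invariant_general {P : Type*} [Group P] [Finite P]
    (G : Subgroup P) (t : P)
    (K : Set P) (hKG : K ⊆ (G : Set P))
    (h1 : (1 : P) ∈ K)
    (hinv : ∀ k ∈ K, t * k * t⁻¹ = k⁻¹)
    (hLambda : ∀ g ∈ G, ∀ k ∈ K, g⁻¹ * (t * k) * g ∈ (fun x => t * x) '' K) :
    (∀ x ∈ K, x⁻¹ ∈ K) ∧ (∀ x ∈ K, ∀ y ∈ K, x * y * x ∈ K) := by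
  have hmul : ∀ x ∈ K, ∀ y ∈ K, x * y * x ∈ K := by
    intro x hx y hy
    obtain ⟨z, hz, hzxy⟩ := hLambda x (hKG hx) y hy
    rw [inv_mul_mul_mul_eq_of_mul_mul_inv_eq_inv (hinv x hx)] at hzxy
    exact mul_left_cancel hzxy ▸ hz
  exact ⟨fun x hx ↦ inv_mem_of_mul_mul_mem h1 hmul hx (isOfFinOrder_of_finite x), hmul⟩

/-- Let `G` be a finite group sitting (as a subgroup) inside the
semidirect product `P = G⟨t⟩`, where `t² = 1` and conjugation by `t` induces an
automorphism `τ` of `G`. Let `K ⊆ G` with `1 ∈ K`, `k^τ = k⁻¹` for all `k ∈ K`,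
and `⟨K⟩ = G`. Set `Λ = tK ⊆ P`. If `Λ` is invariant under conjugation by `G`,
then `K` is a twisted subgroup of `G`, i.e. `x⁻¹ ∈ K` and `x*y*x ∈ K` for all
`x, y ∈ K`. -/
theorem twisted_of_lambda_invariant {P : Type*} [Group P] [Finite P]
    (G : Subgroup P) (t : P) (ht : t ^ 2 = 1)
    (htG : ∀ g ∈ G, t * g * t⁻¹ ∈ G)
    (hP : Subgroup.closure ((G : Set P) ∪ {t}) = ⊤)
    (K : Set P) (hKG : K ⊆ (G : Set P))
    (h1 : (1 : P) ∈ K)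
    (hinv : ∀ k ∈ K, t * k * t⁻¹ = k⁻¹)
    (hgen : Subgroup.closure K = G)
    (hLambda : ∀ g ∈ G, ∀ k ∈ K, g⁻¹ * (t * k) * g ∈ (fun x => t * x) '' K) :
    (∀ x ∈ K, x⁻¹ ∈ K) ∧ (∀ x ∈ K, ∀ y ∈ K, x * y * x ∈ K) :=
  twisted_of_lambda_invariant_general G t K hKG h1 hinv hLambda
end

section
/- Let (G,H,K) be a loop folder in which K is a twisted subgroup. Suppose λ is an element of G (or of G extended by the inverting automorphism) of order dividing 2 such that for all k ∈ K, λkλ ∈ Λ where Λ = λK is G-invariant, and suppose KK ∩ H = {1}. If h ∈ H, g ∈ G, and (h^g)^λ = (h^g)⁻¹, then h² = 1. -/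
/-! Write `x = h^g`. Since `λ` is an involution inverting `x`, `x⁻¹ λ x = λ x²`; as `Λ = λK` is
`G`-invariant and contains `λ`, this forces `x² ∈ K`. But `x² = (h²)^g` also lies in `H^g`, and
`1 ∈ K` makes `x² = (h²)^g · 1 = 1 · x²` two factorisations of `x²` along the transversal `K`
of `H^g`, so `x² = 1` and hence `h² = 1`. -/

section

variable {P : Type*} [Group P]

theorem conj_self_eq_mul_sq_of_inverts {l x : P} (hl : l ^ 2 = 1)
    (hinv : l * x * l = x⁻¹) : x⁻¹ * l * x = l * (x * x) := by
  rw [← hinv]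
  calc l * x * l * l * x = l * x * l ^ 2 * x := by simp only [sq, mul_assoc]
    _ = l * (x * x) := by rw [hl, mul_one, mul_assoc]

theorem mul_self_mem_of_inverts {K : Set P} {l x : P} (hl : l ^ 2 = 1)
    (hinv : l * x * l = x⁻¹) (hconj : x⁻¹ * l * x ∈ (fun y => l * y) '' K) : x * x ∈ K := by
  obtain ⟨k, hk, hlk⟩ := hconj
  rw [conj_self_eq_mul_sq_of_inverts hl hinv] at hlk
  exact mul_left_cancel hlk ▸ hk

theorem conj_eq_one_of_mem_transversal {H : Subgroup P} {K : Set P} (h1 : (1 : P) ∈ K)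
    {u h : P} (hh : h ∈ H)
    (huniq : ∃! k, k ∈ K ∧ ∃ h' ∈ H, u⁻¹ * h * u = u⁻¹ * h' * u * k)
    (hK : u⁻¹ * h * u ∈ K) : u⁻¹ * h * u = 1 :=
  huniq.unique ⟨hK, 1, one_mem H, by group⟩ ⟨h1, h, hh, by group⟩

end

theorem square_trivial_of_lambda_inverts_general {P : Type*} [Group P]
    (G H : Subgroup P) (hHG : H ≤ G) (K : Set P)
    -- loop folder: `K` is a transversal to every conjugate of `H` in `G`, `1 ∈ K`
    (h1 : (1 : P) ∈ K)
    (htrans : ∀ u ∈ G, ∀ g ∈ G,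
      ∃! k, k ∈ K ∧ ∃ h ∈ H, g = u⁻¹ * h * u * k)
    -- the element `l` of order dividing 2
    (l : P) (hl : l ^ 2 = 1)
    -- `Λ = lK` is `G`-invariant
    (hLambda : ∀ g ∈ G, ∀ k ∈ K, g⁻¹ * (l * k) * g ∈ (fun x => l * x) '' K) :
    ∀ h ∈ H, ∀ g ∈ G, l * (g⁻¹ * h * g) * l = (g⁻¹ * h * g)⁻¹ → h ^ 2 = 1 := by
  intro h hh g hg hinv
  have hxG : g⁻¹ * h * g ∈ G := mul_mem (mul_mem (inv_mem hg) (hHG hh)) hg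
  have hsq : (g⁻¹ * h * g) * (g⁻¹ * h * g) = g⁻¹ * (h * h) * g := by group
  have hsqK : g⁻¹ * (h * h) * g ∈ K :=
    hsq ▸ mul_self_mem_of_inverts hl hinv (by simpa only [mul_one] using hLambda _ hxG 1 h1)
  have hsqG : g⁻¹ * (h * h) * g ∈ G := hsq ▸ mul_mem hxG hxG
  have hconj : g⁻¹ * (h * h) * g = 1 :=
    conj_eq_one_of_mem_transversal h1 (mul_mem hh hh) (htrans g hg _ hsqG) hsqK
  rw [sq, ← conj_eq_one_iff (a := g⁻¹), inv_inv, hconj]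

/-- Let `(G,H,K)` be a loop folder with `K` a twisted subgroup,
all inside an ambient group `P` (`P` models `G` possibly extended by the
inverting automorphism). Suppose `l ∈ P` has order dividing `2`, `l k l ∈ Λ`
for all `k ∈ K` where `Λ = lK` is invariant under `G`-conjugation, and
`KK ∩ H = {1}`. If `h ∈ H`, `g ∈ G` and `l` inverts `h^g = g⁻¹ h g`, then
`h² = 1`. -/
theorem square_trivial_of_lambda_inverts {P : Type*} [Group P] [Finite P]
    (G H : Subgroup P) (hHG : H ≤ G) (K : Set P) (hKG : K ⊆ (G : Set P))
    -- loop folder: `K` is a transversal to every conjugate of `H` in `G`, `1 ∈ K`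
    (h1 : (1 : P) ∈ K)
    (htrans : ∀ u ∈ G, ∀ g ∈ G,
      ∃! k, k ∈ K ∧ ∃ h ∈ H, g = u⁻¹ * h * u * k)
    -- `K` is a twisted subgroup
    (hKinv : ∀ x ∈ K, x⁻¹ ∈ K) (hKtw : ∀ x ∈ K, ∀ y ∈ K, x * y * x ∈ K)
    -- the element `l` of order dividing 2
    (l : P) (hl : l ^ 2 = 1)
    (hlK : ∀ k ∈ K, l * k * l ∈ (fun x => l * x) '' K)
    -- `Λ = lK` is `G`-invariant
    (hLambda : ∀ g ∈ G, ∀ k ∈ K, g⁻¹ * (l * k) * g ∈ (fun x => l * x) '' K)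
    -- `KK ∩ H = {1}`
    (hKKH : ∀ k₁ ∈ K, ∀ k₂ ∈ K, k₁ * k₂ ∈ H → k₁ * k₂ = 1) :
    ∀ h ∈ H, ∀ g ∈ G, l * (g⁻¹ * h * g) * l = (g⁻¹ * h * g)⁻¹ → h ^ 2 = 1 :=
  square_trivial_of_lambda_inverts_general G H hHG K h1 htrans l hl hLambda
end

section
/- Let (G,H,K) be a BX2P-folder. Then every subgroup U of G with H ≤ U has index |G : U| equal to 1 or even. -/
/-- `(G,H,K)` is a BX2P-folder: a loop folder (`K` a transversal to all
conjugates of `H` in `G`, `1 ∈ K`) associated to a Bruck loop of 2-power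
exponent: `K` is a twisted subgroup, every element of `K` has 2-power order,
`H` acts on `K` by conjugation, and there is an involutory automorphism `τ`
of `G` centralizing `H` and inverting every element of `K`, such that
`Λ = τK` is invariant under `G`-conjugation in `G⟨τ⟩` (equivalently,
`(τ g)⁻¹ * k * g ∈ K` for all `g ∈ G`, `k ∈ K`). -/
def IsBX2PFolder {G : Type*} [Group G] (H : Subgroup G) (K : Set G)
    (τ : G ≃* G) : Prop :=
  ((1 : G) ∈ K) ∧
  (∀ u g : G, ∃! k, k ∈ K ∧ ∃ h ∈ H, g = u⁻¹ * h * u * k) ∧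
  (∀ x ∈ K, x⁻¹ ∈ K) ∧
  (∀ x ∈ K, ∀ y ∈ K, x * y * x ∈ K) ∧
  (∀ k ∈ K, ∃ n : ℕ, orderOf k = 2 ^ n) ∧
  (∀ h ∈ H, ∀ k ∈ K, h * k * h⁻¹ ∈ K) ∧
  (∀ g : G, τ (τ g) = g) ∧
  (∀ h ∈ H, τ h = h) ∧
  (∀ k ∈ K, τ k = k⁻¹) ∧
  (∀ g : G, ∀ k ∈ K, (τ g)⁻¹ * k * g ∈ K)

/-!
Suppose `|G : U|` is odd. For `k ∈ K` the map `x U ↦ k τ(x) U` is an involution of `G ⧸ U`,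
so it has an odd, hence positive, number of fixed points. Since `k ↦ x⁻¹ k τ(x)` preserves `K`
(this is the invariance of `Λ = τ K`), it maps the `k` fixing `x U` bijectively onto `K ∩ U`;
double counting therefore gives `|G : U| · |K ∩ U| = |G : H| = |K|` fixed points in total, so
each of these involutions has exactly one fixed point. For `k = 1` the fixed points `U` and
`k⁻¹ U` coincide whenever `k ∈ K` and `k² ∈ U`, hence `k ∈ U`. As `K` is closed under squaring
and consists of `2`-elements, `K ⊆ U`, and `U ⊇ H K = G`.
-/

open Function Subgroup

theorem Function.Involutive.card_modEq_card_fixedPoints {α : Type*} [Finite α] {f : α → α}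
    (hf : Involutive f) : Nat.card α ≡ Nat.card (fixedPoints f) [MOD 2] := by
  classical
  have := Fintype.ofFinite α
  let g : Function.End α := f
  have hg : g ^ 2 ^ 1 = 1 := funext hf
  have := Equiv.Perm.card_fixedPoints_modEq (p := 2) (hp := ⟨Nat.prime_two⟩) hg
  simpa only [Nat.card_eq_fintype_card] using this

namespace Subgroup.IsComplement

variable {G : Type*} [Group G] {H U : Subgroup G} {K : Set G}

theorem subgroupOf (hHK : IsComplement H K) (hU : H ≤ U) :
    IsComplement (H.subgroupOf U) (((↑) : U → G) ⁻¹' K) := by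
  refine ⟨fun x y hxy => ?_, fun u => ?_⟩
  · have := hHK.1 (a₁ := (⟨x.1.1, x.1.2⟩, ⟨x.2.1, x.2.2⟩))
      (a₂ := (⟨y.1.1, y.1.2⟩, ⟨y.2.1, y.2.2⟩)) (congrArg Subtype.val hxy)
    simpa only [Prod.ext_iff, Subtype.ext_iff] using this
  · obtain ⟨⟨h, k⟩, hhk⟩ := hHK.2 u
    have hkU : (k : G) ∈ U := by
      simpa [← hhk] using U.mul_mem (U.inv_mem (hU h.2)) u.2
    exact ⟨(⟨⟨h, hU h.2⟩, h.2⟩, ⟨⟨k, hkU⟩, k.2⟩), Subtype.ext hhk⟩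

theorem ncard_inter_mul_index (hHK : IsComplement H K) (hU : H ≤ U) :
    (K ∩ U).ncard * U.index = K.ncard := by
  have hKU : (K ∩ U).ncard = H.relIndex U := by
    rw [Set.inter_comm, ← Subtype.image_preimage_coe,
      Set.ncard_image_of_injective _ Subtype.val_injective]
    exact (hHK.subgroupOf hU).ncard_right
  rw [hKU, relIndex_mul_index hU, hHK.ncard_right]

end Subgroup.IsComplement

section TwistedCosetMap

variable {G : Type*} [Group G] (τ : G ≃* G) {U : Subgroup G} (hτU : ∀ u ∈ U, τ u ∈ U)

/-- The action of `a τ ∈ G⟨τ⟩` on `G ⧸ U`. -/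
def twistedCosetMap (a : G) : G ⧸ U → G ⧸ U :=
  Quotient.map' (fun x => a * τ x) fun x y hxy => by
    rw [QuotientGroup.leftRel_apply] at hxy ⊢
    simpa [mul_assoc] using hτU _ hxy

variable {τ}

@[simp]
theorem twistedCosetMap_mk (a x : G) :
    twistedCosetMap τ hτU a (x : G ⧸ U) = ((a * τ x : G) : G ⧸ U) :=
  rfl

theorem twistedCosetMap_mk_eq_self_iff (a x : G) :
    twistedCosetMap τ hτU a (x : G ⧸ U) = x ↔ x⁻¹ * a * τ x ∈ U := by
  rw [twistedCosetMap_mk, QuotientGroup.eq, ← U.inv_mem_iff]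
  simp [mul_assoc]

theorem involutive_twistedCosetMap (hτ : ∀ g, τ (τ g) = g) {a : G} (ha : τ a = a⁻¹) :
    Involutive (twistedCosetMap τ hτU a) := by
  intro ω
  induction ω using QuotientGroup.induction_on with
  | H x => simp only [twistedCosetMap_mk, map_mul, ha, hτ, mul_inv_cancel_left]

variable {K : Set G}

theorem ncard_setOf_twistedCosetMap_eq_self (hK : ∀ x, ∀ k ∈ K, x⁻¹ * k * τ x ∈ K)
    (ω : G ⧸ U) : {k ∈ K | twistedCosetMap τ hτU k ω = ω}.ncard = (K ∩ U).ncard := by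
  induction ω using QuotientGroup.induction_on with
  | H x =>
    have himage : (fun k => x⁻¹ * k * τ x) '' {k ∈ K | twistedCosetMap τ hτU k x = x} =
        K ∩ U := by
      ext k'
      constructor
      · rintro ⟨k, ⟨hk, hfix⟩, rfl⟩
        exact ⟨hK x k hk, (twistedCosetMap_mk_eq_self_iff hτU k x).1 hfix⟩
      · rintro ⟨hk', hk'U⟩
        refine ⟨x * k' * (τ x)⁻¹, ⟨by simpa using hK x⁻¹ k' hk', ?_⟩, by group⟩
        rw [twistedCosetMap_mk_eq_self_iff]
        simpa [mul_assoc] using hk'U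
    rw [← himage, Set.ncard_image_of_injective _ fun a b hab => by simpa using hab]

theorem sum_ncard_fixedPoints_twistedCosetMap [Finite G]
    (hK : ∀ x, ∀ k ∈ K, x⁻¹ * k * τ x ∈ K) :
    ∑ k ∈ K.toFinite.toFinset, (fixedPoints (twistedCosetMap τ hτU k)).ncard =
      U.index * (K ∩ U).ncard := by
  classical
  have := Fintype.ofFinite (G ⧸ U)
  calc ∑ k ∈ K.toFinite.toFinset, (fixedPoints (twistedCosetMap τ hτU k)).ncard
      = ∑ k ∈ K.toFinite.toFinset, ∑ ω : G ⧸ U,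
          if twistedCosetMap τ hτU k ω = ω then 1 else 0 := by
        refine Finset.sum_congr rfl fun k _ => ?_
        rw [Finset.sum_boole, Nat.cast_id, Set.ncard_eq_toFinset_card']
        congr 1
        ext ω
        simp [IsFixedPt]
    _ = ∑ ω : G ⧸ U, ∑ k ∈ K.toFinite.toFinset,
          if twistedCosetMap τ hτU k ω = ω then 1 else 0 := Finset.sum_comm
    _ = ∑ _ω : G ⧸ U, (K ∩ U).ncard := by
        refine Finset.sum_congr rfl fun ω _ => ?_
        rw [Finset.sum_boole, ← ncard_setOf_twistedCosetMap_eq_self hτU hK ω,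
          ← Set.ncard_coe_finset, Finset.coe_filter]
        simp
    _ = U.index * (K ∩ U).ncard := by
        rw [Finset.sum_const, Finset.card_univ, smul_eq_mul, index_eq_card,
          Nat.card_eq_fintype_card]

theorem ncard_fixedPoints_twistedCosetMap_eq_one [Finite G] {H : Subgroup G}
    (hHK : IsComplement H K) (hU : H ≤ U) (hτ : ∀ g, τ (τ g) = g)
    (hτK : ∀ k ∈ K, τ k = k⁻¹) (hK : ∀ x, ∀ k ∈ K, x⁻¹ * k * τ x ∈ K) (hodd : Odd U.index)
    {k : G} (hk : k ∈ K) : (fixedPoints (twistedCosetMap τ hτU k)).ncard = 1 := by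
  have hpos : ∀ k ∈ K.toFinite.toFinset, 1 ≤ (fixedPoints (twistedCosetMap τ hτU k)).ncard := by
    intro k hk
    rw [Set.Finite.mem_toFinset] at hk
    have hmod := (involutive_twistedCosetMap hτU hτ (hτK k hk)).card_modEq_card_fixedPoints
    rw [← index_eq_card, Nat.card_coe_set_eq] at hmod
    have hodd' : Odd (fixedPoints (twistedCosetMap τ hτU k)).ncard := by
      rwa [Nat.odd_iff, ← hmod, ← Nat.odd_iff]
    exact hodd'.pos
  have hsum : ∑ k ∈ K.toFinite.toFinset, 1 =
      ∑ k ∈ K.toFinite.toFinset, (fixedPoints (twistedCosetMap τ hτU k)).ncard := by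
    rw [sum_ncard_fixedPoints_twistedCosetMap hτU hK, mul_comm, hHK.ncard_inter_mul_index hU,
      Finset.sum_const, smul_eq_mul, mul_one, Set.ncard_eq_toFinset_card]
  exact ((Finset.sum_eq_sum_iff_of_le hpos).1 hsum k (by simpa)).symm

theorem mem_of_sq_mem_of_ncard_fixedPoints_eq_one
    (h1 : (fixedPoints (twistedCosetMap τ hτU 1)).ncard = 1) {k : G} (hk : τ k = k⁻¹)
    (hk2 : k ^ 2 ∈ U) : k ∈ U := by
  obtain ⟨ω, hω⟩ := Set.ncard_eq_one.1 h1
  have hfix : ∀ x : G, x⁻¹ * τ x ∈ U → (x : G ⧸ U) = ω := fun x hx => by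
    rw [← Set.mem_singleton_iff, ← hω]
    exact (twistedCosetMap_mk_eq_self_iff hτU 1 x).2 (by simpa using hx)
  have := (hfix k⁻¹ (by simpa [hk, sq] using hk2)).trans (hfix 1 (by simp)).symm
  simpa using QuotientGroup.eq.1 this

end TwistedCosetMap

theorem subset_of_sq_mem_imp_mem {G : Type*} [Group G] {S : Set G} {U : Subgroup G}
    (hS : ∀ k ∈ S, k ^ 2 ∈ S) (horder : ∀ k ∈ S, ∃ n : ℕ, orderOf k = 2 ^ n)
    (hsq : ∀ k ∈ S, k ^ 2 ∈ U → k ∈ U) : S ⊆ U := by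
  suffices h : ∀ n : ℕ, ∀ k ∈ S, k ^ 2 ^ n = 1 → k ∈ U by
    intro k hk
    obtain ⟨n, hn⟩ := horder k hk
    exact h n k hk (hn ▸ pow_orderOf_eq_one k)
  intro n
  induction n with
  | zero =>
    intro k _ hk
    simp_all
  | succ n ih =>
    intro k hk hk1
    exact hsq k hk (ih _ (hS k hk) (by rwa [← pow_mul, ← pow_succ']))

namespace IsBX2PFolder

variable {G : Type*} [Group G] {H : Subgroup G} {K : Set G} {τ : G ≃* G}

theorem isComplement (hF : IsBX2PFolder H K τ) : IsComplement H K := by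
  refine isComplement_iff_existsUnique_mul_inv_mem.2 fun g => ?_
  obtain ⟨k, ⟨hk, h, hh, hg⟩, huniq⟩ := hF.2.1 1 g
  refine ⟨⟨k, hk⟩, by simpa [hg] using hh, fun k' hk' => Subtype.ext ?_⟩
  exact huniq k' ⟨k'.2, _, hk', by simp⟩

theorem apply_mem_of_le (hF : IsBX2PFolder H K τ) {U : Subgroup G} (hU : H ≤ U) :
    ∀ u ∈ U, τ u ∈ U := by
  obtain ⟨-, hdecomp, -, -, -, -, -, hτH, hτK, -⟩ := hF
  intro u hu
  obtain ⟨k, ⟨hk, h, hh, rfl⟩, -⟩ := hdecomp 1 u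
  simp only [inv_one, mul_one, one_mul] at hu ⊢
  have hkU : k ∈ U := by simpa using U.mul_mem (U.inv_mem (hU hh)) hu
  rw [map_mul, hτH h hh, hτK k hk]
  exact U.mul_mem (hU hh) (U.inv_mem hkU)

theorem inv_mul_mul_apply_mem (hF : IsBX2PFolder H K τ) (x : G) {k : G} (hk : k ∈ K) :
    x⁻¹ * k * τ x ∈ K := by
  obtain ⟨-, -, -, -, -, -, hτ, -, -, hΛ⟩ := hF
  simpa [hτ] using hΛ (τ x) k hk

theorem eq_top_of_odd_index [Finite G] (hF : IsBX2PFolder H K τ) {U : Subgroup G} (hU : H ≤ U)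
    (hodd : Odd U.index) : U = ⊤ := by
  have hHK := hF.isComplement
  have hτU := hF.apply_mem_of_le hU
  have hK := hF.inv_mul_mul_apply_mem
  obtain ⟨h1, -, -, hsq, horder, -, hτ, -, hτK, -⟩ := hF
  have hfix : (fixedPoints (twistedCosetMap τ hτU 1)).ncard = 1 :=
    ncard_fixedPoints_twistedCosetMap_eq_one hτU hHK hU hτ hτK hK hodd h1
  have hKU : K ⊆ U :=
    subset_of_sq_mem_imp_mem (fun k hk => by simpa [sq] using hsq k hk 1 h1) horder
      fun k hk => mem_of_sq_mem_of_ncard_fixedPoints_eq_one hτU hfix (hτK k hk)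
  refine eq_top_iff.2 fun g _ => ?_
  obtain ⟨⟨h, k⟩, rfl⟩ := hHK.2 g
  exact U.mul_mem (hU h.2) (hKU k.2)

end IsBX2PFolder

/-- If `(G,H,K)` is a BX2P-folder, then every subgroup `U` of `G`
with `H ≤ U` has index `|G : U|` equal to `1` or even. -/
theorem index_one_or_even_of_overgroup {G : Type*} [Group G] [Finite G]
    (H : Subgroup G) (K : Set G) (τ : G ≃* G)
    (hfolder : IsBX2PFolder H K τ)
    (U : Subgroup G) (hU : H ≤ U) :
    U.index = 1 ∨ Even U.index :=
  (Nat.even_or_odd U.index).symm.imp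
    (fun hodd => index_eq_one.2 (hfolder.eq_top_of_odd_index hU hodd)) id
end

section
/- Let (G,H,K) be a BX2P-folder. Then H is a 2-group if and only if G is a 2-group. -/
/-!
Let `U ≥ H` have odd index. Since `G = HK`, with `τ` fixing `H` and inverting `K`, `τ` normalises
`U`, so each `k ∈ K` gives an involution `gU ↦ k⁻¹τ(g)U` of `G/U`, which has a fixed point because
`|G : U|` is odd. On the other hand, `K` is a transversal to every conjugate of `H`, so each coset
`gU` is fixed by exactly `|U : H|` of these involutions; summing, the total number of fixed points
is `|G : U| |U : H| = |K|`. Hence every involution, in particular `gU ↦ τ(g)U`, has exactly one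
fixed point. For `k ∈ K` with `k² ∈ U` the coset `kU` is such a fixed point, so `k ∈ U`; as `K`
is closed under squaring and consists of 2-elements, `K ⊆ U` and `U = HK = G`. Applied to a Sylow
2-subgroup containing a 2-group `H`, this shows that `G` is a 2-group.
-/

open Function

theorem Function.Involutive.exists_isFixedPt_of_not_two_dvd_card {α : Type*} [Finite α]
    {f : α → α} (hf : Involutive f) (hα : ¬ 2 ∣ Nat.card α) : ∃ a, IsFixedPt f a := by
  have : Fact (Nat.Prime 2) := ⟨Nat.prime_two⟩
  have := Fintype.ofFinite α
  rw [Nat.card_eq_fintype_card] at hα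
  refine Equiv.Perm.exists_fixed_point_of_prime (n := 1) hα (σ := hf.toPerm f) ?_
  ext a
  simp only [pow_one, sq, Equiv.Perm.mul_apply, Involutive.coe_toPerm, Equiv.Perm.one_apply]
  exact hf a

theorem Fintype.sum_card_subtype_comm {α β : Type*} [Fintype α] [Fintype β] (r : α → β → Prop) :
    ∑ a, Nat.card {b // r a b} = ∑ b, Nat.card {a // r a b} := by
  classical
  simp only [Nat.card_eq_fintype_card, Fintype.card_subtype, Finset.card_filter]
  exact Finset.sum_comm

theorem mem_of_pow_two_pow_eq_one {G : Type*} [Group G] {U : Subgroup G} {K : Set G}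
    (hsq : ∀ k ∈ K, k * k ∈ K) (hU : ∀ k ∈ K, k * k ∈ U → k ∈ U) :
    ∀ n : ℕ, ∀ k ∈ K, k ^ 2 ^ n = 1 → k ∈ U
  | 0, k, _, hk => by simp_all
  | n + 1, k, hkK, hk => by
    refine hU k hkK (mem_of_pow_two_pow_eq_one hsq hU n _ (hsq k hkK) ?_)
    rwa [← sq, ← pow_mul, ← pow_succ']

theorem card_transversal_inter_eq_relIndex {G : Type*} [Group G] {L V : Subgroup G} {K : Set G}
    {u : G} (hK : ∀ g, ∃! k, k ∈ K ∧ ∃ h ∈ L, g = u⁻¹ * h * u * k) (hLV : L ≤ V) (x : G) :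
    Nat.card {k : K // u * k * x ∈ V} = L.relIndex V := by
  let f : {k : K // u * k * x ∈ V} → V ⧸ L.subgroupOf V :=
    fun k => QuotientGroup.mk ⟨(u * k * x)⁻¹, V.inv_mem k.2⟩
  have hf : Bijective f := by
    constructor
    · rintro ⟨⟨k, hk⟩, _⟩ ⟨⟨k', hk'⟩, _⟩ he
      have hL : u * (k * k'⁻¹) * u⁻¹ ∈ L := by
        have := QuotientGroup.eq.mp he
        rw [Subgroup.mem_subgroupOf] at this
        simpa [mul_assoc] using this
      obtain ⟨k₀, -, huniq⟩ := hK k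
      have e₁ := huniq k ⟨hk, 1, L.one_mem, by group⟩
      have e₂ := huniq k' ⟨hk', _, hL, by group⟩
      simp only [Subtype.mk.injEq]
      rw [e₁, e₂]
    · rintro ⟨v, hv⟩
      obtain ⟨k, ⟨hk, h, hh, hkh⟩, -⟩ := hK (u⁻¹ * v⁻¹ * x⁻¹)
      have hukx : u * k * x = h⁻¹ * v⁻¹ := by
        rw [eq_inv_mul_of_mul_eq hkh.symm]
        group
      have hkV : u * k * x ∈ V := hukx ▸ V.mul_mem (hLV (L.inv_mem hh)) (V.inv_mem hv)
      refine ⟨⟨⟨k, hk⟩, hkV⟩, QuotientGroup.eq.mpr ?_⟩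
      rw [Subgroup.mem_subgroupOf]
      simpa [hukx] using L.inv_mem hh
  exact Nat.card_eq_of_bijective f hf

section TwistedMap

variable {G : Type*} [Group G] (τ : G →* G) {U : Subgroup G} (hτU : U ≤ U.comap τ)

/-- For an automorphism `τ`, the action of `k⁻¹τ ∈ G ⋊ ⟨τ⟩` on the cosets of `U ⋊ ⟨τ⟩`. -/
def twistedMap (k : G) : G ⧸ U → G ⧸ U :=
  Quotient.map' (fun g => k⁻¹ * τ g) fun a b hab => by
    refine QuotientGroup.leftRel_apply.mpr ?_
    have : (k⁻¹ * τ a)⁻¹ * (k⁻¹ * τ b) = τ (a⁻¹ * b) := by simp [mul_assoc]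
    exact this ▸ hτU (QuotientGroup.leftRel_apply.mp hab)

theorem twistedMap_mk (k g : G) : twistedMap τ hτU k g = ↑(k⁻¹ * τ g) := rfl

theorem isFixedPt_twistedMap_mk_iff (k g : G) :
    IsFixedPt (twistedMap τ hτU k) g ↔ (τ g)⁻¹ * k * g ∈ U := by
  rw [IsFixedPt, twistedMap_mk, QuotientGroup.eq]
  simp [mul_assoc]

theorem twistedMap_involutive (hτ : ∀ g, τ (τ g) = g) {k : G} (hk : τ k = k⁻¹) :
    Involutive (twistedMap τ hτU k) := by
  rintro ⟨g⟩
  change ((k⁻¹ * τ (k⁻¹ * τ g) : G) : G ⧸ U) = g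
  simp [hk, hτ]

end TwistedMap

namespace IsBX2PFolder

variable {G : Type*} [Group G] {H U : Subgroup G} {K : Set G} {τ : G ≃* G}

theorem exists_mul_eq (hF : IsBX2PFolder H K τ) (g : G) : ∃ h ∈ H, ∃ k ∈ K, h * k = g := by
  obtain ⟨k, ⟨hk, h, hh, rfl⟩, -⟩ := hF.2.1 1 g
  exact ⟨h, hh, k, hk, by group⟩

theorem card_eq_index (hF : IsBX2PFolder H K τ) : Nat.card K = H.index := by
  rw [← Subgroup.relIndex_top_right, ← card_transversal_inter_eq_relIndex (hF.2.1 1) le_top 1]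
  exact Nat.card_congr (Equiv.subtypeUnivEquiv fun _ => Subgroup.mem_top _).symm

theorem le_comap (hF : IsBX2PFolder H K τ) (hHU : H ≤ U) : U ≤ U.comap τ.toMonoidHom := by
  obtain ⟨-, -, -, -, -, -, -, hτH, hτK, -⟩ := id hF
  intro x hx
  obtain ⟨h, hh, k, hk, rfl⟩ := hF.exists_mul_eq x
  have hkU : k ∈ U := by simpa using U.mul_mem (U.inv_mem (hHU hh)) hx
  simpa [hτH h hh, hτK k hk] using U.mul_mem (hHU hh) (U.inv_mem hkU)

theorem card_fixedPoints_twistedMap [Finite G] (hF : IsBX2PFolder H K τ) (hHU : H ≤ U)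
    (hU : ¬ 2 ∣ U.index) {k : G} (hk : k ∈ K) :
    Nat.card (fixedPoints (twistedMap τ.toMonoidHom (hF.le_comap hHU) k)) = 1 := by
  classical
  have := Fintype.ofFinite G
  obtain ⟨-, htrans, -, -, -, -, hτ2, -, hτK, -⟩ := id hF
  set f := twistedMap τ.toMonoidHom (hF.le_comap hHU)
  have hpos : ∀ k : K, 1 ≤ Nat.card (fixedPoints (f k)) := fun k => by
    obtain ⟨ω, hω⟩ := (twistedMap_involutive τ.toMonoidHom _ hτ2
      (hτK k k.2)).exists_isFixedPt_of_not_two_dvd_card hU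
    exact Nat.card_pos_iff.mpr ⟨⟨⟨ω, hω⟩⟩, inferInstance⟩
  have hcol : ∀ ω : G ⧸ U, Nat.card {k : K // IsFixedPt (f k) ω} = H.relIndex U := by
    intro ω
    induction ω using QuotientGroup.induction_on with | H g =>
    rw [← card_transversal_inter_eq_relIndex (htrans (τ g)⁻¹) hHU g]
    exact Nat.card_congr (Equiv.subtypeEquivRight fun k => isFixedPt_twistedMap_mk_iff _ _ _ _)
  have hsum : ∑ k : K, Nat.card (fixedPoints (f k)) = ∑ _k : K, 1 :=
    calc _ = ∑ ω : G ⧸ U, Nat.card {k : K // IsFixedPt (f k) ω} := Fintype.sum_card_subtype_comm _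
      _ = U.index * H.relIndex U := by
        rw [Finset.sum_congr rfl fun ω _ => hcol ω, Finset.sum_const, smul_eq_mul,
          Finset.card_univ, Subgroup.index, Nat.card_eq_fintype_card]
      _ = Nat.card K := by rw [mul_comm, Subgroup.relIndex_mul_index hHU, hF.card_eq_index]
      _ = ∑ _k : K, 1 := by simp [Nat.card_eq_fintype_card]
  exact ((Finset.sum_eq_sum_iff_of_le fun k _ => hpos k).mp hsum.symm ⟨k, hk⟩
    (Finset.mem_univ _)).symm

theorem mem_of_mul_self_mem [Finite G] (hF : IsBX2PFolder H K τ) (hHU : H ≤ U)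
    (hU : ¬ 2 ∣ U.index) {k : G} (hk : k ∈ K) (hkk : k * k ∈ U) : k ∈ U := by
  obtain ⟨h1K, -, -, -, -, -, -, -, hτK, -⟩ := id hF
  set f := twistedMap τ.toMonoidHom (hF.le_comap hHU) 1
  have h1 : ((1 : G) : G ⧸ U) ∈ fixedPoints f := by
    rw [mem_fixedPoints, isFixedPt_twistedMap_mk_iff]
    simp
  have hk' : (k : G ⧸ U) ∈ fixedPoints f := by
    rw [mem_fixedPoints, isFixedPt_twistedMap_mk_iff]
    simpa [hτK k hk] using hkk
  have := (Nat.card_eq_one_iff_unique.mp (hF.card_fixedPoints_twistedMap hHU hU h1K)).1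
  have hk1 := congrArg Subtype.val (Subsingleton.elim (⟨_, hk'⟩ : fixedPoints f) ⟨_, h1⟩)
  simpa using QuotientGroup.eq.mp hk1

theorem eq_top_of_le_of_not_two_dvd_index [Finite G] (hF : IsBX2PFolder H K τ) (hHU : H ≤ U)
    (hU : ¬ 2 ∣ U.index) : U = ⊤ := by
  obtain ⟨h1K, -, -, htwist, hord, -⟩ := id hF
  have hsq : ∀ k ∈ K, k * k ∈ K := fun k hk => by simpa using htwist k hk 1 h1K
  have hKU : ∀ k ∈ K, k ∈ U := fun k hk => by
    obtain ⟨n, hn⟩ := hord k hk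
    exact mem_of_pow_two_pow_eq_one hsq (fun _ => hF.mem_of_mul_self_mem hHU hU) n k hk
      (hn ▸ pow_orderOf_eq_one k)
  refine eq_top_iff.mpr fun g _ => ?_
  obtain ⟨h, hh, k, hk, rfl⟩ := hF.exists_mul_eq g
  exact U.mul_mem (hHU hh) (hKU k hk)

end IsBX2PFolder

/-- If `(G,H,K)` is a BX2P-folder, then `H` is a 2-group if and
only if `G` is a 2-group. -/
theorem H_two_group_iff_G_two_group {G : Type*} [Group G] [Finite G]
    (H : Subgroup G) (K : Set G) (τ : G ≃* G)
    (hfolder : IsBX2PFolder H K τ) :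
    IsPGroup 2 H ↔ IsPGroup 2 G := by
  have : Fact (Nat.Prime 2) := ⟨Nat.prime_two⟩
  refine ⟨fun hH => ?_, fun hG => hG.to_subgroup H⟩
  obtain ⟨P, hHP⟩ := hH.exists_le_sylow
  have hP : (P : Subgroup G) = ⊤ :=
    hfolder.eq_top_of_le_of_not_two_dvd_index hHP P.not_dvd_index
  exact (hP ▸ P.isPGroup').of_equiv Subgroup.topEquiv
end

section
/- Let (G,H,K) be a BX2P-folder. Then for every k ∈ K, k² ∈ O₂(G), where O₂(G) is the largest normal 2-subgroup of G. Moreover, in Ḡ = G/O₂(G), the image K̄ consists of 1 together with elements of order at most 2, and K̄ \ {1} is a union of Ḡ-conjugacy classes of involutions. -/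
open Subgroup

theorem Subgroup.card_lt_card_of_lt {Γ : Type*} [Group Γ] {H K : Subgroup Γ} [Finite K]
    (h : H < K) : Nat.card H < Nat.card K :=
  (card_le_of_le h.le).lt_of_ne fun hc => h.ne (eq_of_le_of_card_ge h.le hc.ge)

namespace IsPGroup

variable {Γ : Type*} [Group Γ] {p : ℕ} [Fact p.Prime]

theorem exists_le_lt_le_normalizer {P U : Subgroup Γ} [Finite P] (hP : IsPGroup p P)
    (hUP : U < P) : ∃ M : Subgroup Γ, U ≤ M ∧ M < P ∧ P ≤ normalizer (M : Set Γ) := by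
  have : Group.IsNilpotent P := hP.isNilpotent
  obtain ⟨M, hM, hUM⟩ := (eq_top_or_exists_le_coatom (U.subgroupOf P)).resolve_left
    fun h => hUP.not_ge (subgroupOf_eq_top.mp h)
  have hMP : (M.map P.subtype).subgroupOf P = M :=
    comap_map_eq_self_of_injective P.subtype_injective M
  refine ⟨M.map P.subtype, fun u hu => ⟨⟨u, hUP.le hu⟩, hUM (mem_subgroupOf.mpr hu), rfl⟩,
    (map_subtype_le M).lt_of_ne fun h => hM.1 ?_, ?_⟩
  · rw [← hMP, h, subgroupOf_self]
  · rw [← normal_subgroupOf_iff_le_normalizer (map_subtype_le M), hMP]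
    exact Group.normalizerCondition_of_isNilpotent.normal_of_coatom M hM

/-- Pass to a maximal subgroup `M ⊇ U` of `P`, which is normal. If `E ∩ M` still generates
more than `U`, recurse into `⟨E ∩ M⟩`; otherwise any `e ∈ E \ M` permutes `E ∩ M` and hence
normalizes `U = ⟨E ∩ M⟩`. -/
theorem exists_mem_normalizer_of_closure_eq [Finite Γ] {P U : Subgroup Γ} {E : Set Γ}
    (hP : IsPGroup p P) (hEP : closure E = P) (hE : ∀ g ∈ P, ∀ e ∈ E, g * e * g⁻¹ ∈ E)
    (hUE : closure (E ∩ U) = U) (hUP : U < P) :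
    ∃ e ∈ E, e ∉ U ∧ e ∈ normalizer (U : Set Γ) := by
  induction hn : Nat.card P using Nat.strong_induction_on generalizing P E with
  | _ n ih =>
  obtain ⟨M, hUM, hMP, hPM⟩ := hP.exists_le_lt_le_normalizer hUP
  have hEM : ∀ g ∈ P, ∀ e ∈ E ∩ M, g * e * g⁻¹ ∈ E ∩ M := fun g hg e he =>
    ⟨hE g hg e he.1, (mem_normalizer_iff.mp (hPM hg) e).mp he.2⟩
  have hUP₀ : U ≤ closure (E ∩ M) := hUE ▸ closure_mono (Set.inter_subset_inter_right E hUM)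
  rcases hUP₀.lt_or_eq with hlt | heq
  · have hP₀M : closure (E ∩ M) ≤ M := closure_le _ |>.mpr Set.inter_subset_right
    obtain ⟨e, he, heU, heN⟩ := ih _ (hn ▸ (card_le_of_le hP₀M).trans_lt (card_lt_card_of_lt hMP))
      (hP.to_le (hP₀M.trans hMP.le)) rfl (fun g hg => hEM g (hMP.le (hP₀M hg)))
      (by rwa [Set.inter_assoc, Set.inter_eq_right.mpr hUM]) hlt rfl
    exact ⟨e, he.1, heU, heN⟩
  · obtain ⟨e, he, heM⟩ : ∃ e ∈ E, e ∉ M := Set.not_subset.mp fun hEM =>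
      hMP.not_ge (hEP ▸ closure_le _ |>.mpr hEM)
    have heP : e ∈ P := hEP ▸ subset_closure he
    refine ⟨e, he, fun heU => heM (hUM heU), heq ▸ normalizer_le_normalizer_closure _ ?_⟩
    refine mem_set_normalizer_iff.mpr fun x => ⟨hEM e heP x, fun hx => ?_⟩
    simpa [mul_assoc] using hEM e⁻¹ (inv_mem heP) _ hx

end IsPGroup

section Baer

variable {Γ : Type*} [Group Γ] [Finite Γ] {p : ℕ} [Fact p.Prime] {D : Set Γ}

theorem card_closure_inter_sylow_eq (hD : ∀ g : Γ, ∀ d ∈ D, g * d * g⁻¹ ∈ D)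
    (T T' : Sylow p Γ) : Nat.card (closure (D ∩ T)) = Nat.card (closure (D ∩ T')) := by
  obtain ⟨g, rfl⟩ := MulAction.exists_smul_eq Γ T T'
  have hconj : D ∩ ↑(g • T) = MulAut.conj g '' (D ∩ T) := by
    ext x
    simp only [Sylow.coe_smul, Set.mem_inter_iff, Set.mem_smul_set, MulAut.smul_def,
      MulAut.conj_apply, Set.mem_image, SetLike.mem_coe]
    constructor
    · rintro ⟨hx, y, hy, rfl⟩
      exact ⟨y, ⟨by simpa [mul_assoc] using hD g⁻¹ _ hx, hy⟩, rfl⟩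
    · rintro ⟨y, ⟨hyD, hyT⟩, rfl⟩
      exact ⟨hD g y hyD, y, hyT, rfl⟩
  rw [hconj, ← MonoidHom.coe_coe, ← MonoidHom.map_closure, card_map_of_injective]
  exact (MulAut.conj g).injective

theorem closure_inter_sylow_eq_of_le (hD : ∀ g : Γ, ∀ d ∈ D, g * d * g⁻¹ ∈ D)
    {T T' : Sylow p Γ} (h : closure (D ∩ T) ≤ closure (D ∩ T')) :
    closure (D ∩ T) = closure (D ∩ T') :=
  eq_of_le_of_card_ge h (card_closure_inter_sylow_eq hD T' T).le

theorem exists_mem_inter_sylow_normalizer (hD : ∀ g : Γ, ∀ d ∈ D, g * d * g⁻¹ ∈ D)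
    {T T' : Sylow p Γ} (hne : closure (D ∩ T) ≠ closure (D ∩ T')) :
    ∃ e ∈ D ∩ T, e ∉ closure (D ∩ T ∩ T') ∧
      e ∈ normalizer (closure (D ∩ T ∩ T') : Set Γ) := by
  have hle : closure (D ∩ T) ≤ T := closure_le _ |>.mpr Set.inter_subset_right
  refine (T.isPGroup'.to_le hle).exists_mem_normalizer_of_closure_eq rfl
    (fun g hg e he => ⟨hD g e he.1, mul_mem (mul_mem (hle hg) he.2) (inv_mem (hle hg))⟩)
    (le_antisymm (closure_le _ |>.mpr Set.inter_subset_right)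
      (Subgroup.closure_mono fun x hx => ⟨hx.1, subset_closure hx⟩))
    ((Subgroup.closure_mono Set.inter_subset_left).lt_of_ne fun h => hne ?_)
  exact closure_inter_sylow_eq_of_le hD
    (h ▸ Subgroup.closure_mono fun x hx => ⟨hx.1.1, hx.2⟩)

theorem exists_sylow_closure_inter_lt (hD : ∀ g : Γ, ∀ d ∈ D, g * d * g⁻¹ ∈ D)
    (hpair : ∀ a ∈ D, ∀ b ∈ D, IsPGroup p (closure {a, b}))
    {T₁ T₂ : Sylow p Γ} (hne : closure (D ∩ T₁) ≠ closure (D ∩ T₂)) :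
    ∃ T : Sylow p Γ, closure (D ∩ T₁ ∩ T₂) < closure (D ∩ T₁ ∩ T) ∧
      closure (D ∩ T₁ ∩ T₂) < closure (D ∩ T₂ ∩ T) := by
  set U := closure (D ∩ T₁ ∩ T₂)
  obtain ⟨e₁, he₁, he₁U, he₁N⟩ := exists_mem_inter_sylow_normalizer hD hne
  obtain ⟨e₂, he₂, he₂U, he₂N⟩ := exists_mem_inter_sylow_normalizer hD hne.symm
  rw [Set.inter_right_comm] at he₂U he₂N
  have hU : IsPGroup p U := T₁.isPGroup'.to_le (closure_le _ |>.mpr fun x hx => hx.1.2)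
  obtain ⟨T, hT⟩ := (hU.to_sup_of_normal_left' (hpair e₁ he₁.1 e₂ he₂.1)
    (closure_le _ |>.mpr (Set.insert_subset_iff.mpr ⟨he₁N, Set.singleton_subset_iff.mpr he₂N⟩)))
    |>.exists_le_sylow
  have hlt : ∀ T' : Sylow p Γ, D ∩ T₁ ∩ T₂ ⊆ D ∩ T' → ∀ e ∈ D ∩ T', e ∈ closure {e₁, e₂} →
      e ∉ U → U < closure (D ∩ T' ∩ T) := fun T' hT' e he heX heU =>
    SetLike.lt_iff_le_and_exists.mpr ⟨Subgroup.closure_mono fun x hx =>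
      ⟨hT' hx, hT (le_sup_left (a := U) (subset_closure hx))⟩,
      e, subset_closure ⟨he, hT (le_sup_right (b := closure {e₁, e₂}) heX)⟩, heU⟩
  exact ⟨T, hlt T₁ (fun x hx => hx.1) e₁ he₁ (subset_closure (by simp)) he₁U,
    hlt T₂ (fun x hx => ⟨hx.1.1, hx.2⟩) e₂ he₂ (subset_closure (by simp)) he₂U⟩

theorem closure_inter_sylow_eq (hD : ∀ g : Γ, ∀ d ∈ D, g * d * g⁻¹ ∈ D)
    (hpair : ∀ a ∈ D, ∀ b ∈ D, IsPGroup p (closure {a, b})) (T T' : Sylow p Γ) :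
    closure (D ∩ T) = closure (D ∩ T') := by
  by_contra hne
  obtain ⟨⟨T₁, T₂⟩, hne₁₂, hmax⟩ := Set.exists_max_image
    {q : Sylow p Γ × Sylow p Γ | closure (D ∩ q.1) ≠ closure (D ∩ q.2)}
    (fun q => Nat.card (closure (D ∩ q.1 ∩ q.2))) (Set.toFinite _) ⟨(T, T'), hne⟩
  obtain ⟨T, h₁, h₂⟩ := exists_sylow_closure_inter_lt hD hpair hne₁₂
  have h₁T : closure (D ∩ T₁) = closure (D ∩ T) := by
    by_contra h
    exact (card_lt_card_of_lt h₁).not_ge (hmax (T₁, T) h)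
  have h₂T : closure (D ∩ T₂) = closure (D ∩ T) := by
    by_contra h
    exact (card_lt_card_of_lt h₂).not_ge (hmax (T₂, T) h)
  exact hne₁₂ (h₁T.trans h₂T.symm)

/-- Baer's theorem, for a normal subset rather than a conjugacy class. -/
theorem isPGroup_closure_of_isPGroup_closure_pair (hD : ∀ g : Γ, ∀ d ∈ D, g * d * g⁻¹ ∈ D)
    (hpair : ∀ a ∈ D, ∀ b ∈ D, IsPGroup p (closure {a, b})) : IsPGroup p (closure D) := by
  obtain ⟨T⟩ : Nonempty (Sylow p Γ) := inferInstance
  have hDT : closure D ≤ closure (D ∩ T) := (closure_le _).mpr fun d hd => by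
    obtain ⟨T', hT'⟩ := (hpair d hd d hd).exists_le_sylow
    exact closure_inter_sylow_eq hD hpair T' T ▸
      subset_closure ⟨hd, hT' (subset_closure (by simp))⟩
  exact T.isPGroup'.to_le (hDT.trans (closure_le _ |>.mpr Set.inter_subset_right))

end Baer

section Involutions

variable {Γ : Type*} [Group Γ]

theorem isPGroup_closure_pair_of_sq_eq_one {a b : Γ} (ha : a ^ 2 = 1) (hb : b ^ 2 = 1)
    (hab : ∃ n, orderOf (a * b) = 2 ^ n) : IsPGroup 2 (closure {a, b}) := by
  obtain ⟨n, hn⟩ := hab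
  have hZ : IsPGroup 2 (zpowers (a * b)) := IsPGroup.of_card (by rw [Nat.card_zpowers, hn])
  obtain ⟨m, -, hm⟩ := (Nat.dvd_prime_pow Nat.prime_two).mp
    (orderOf_dvd_of_pow_eq_one (by rwa [pow_one]) : orderOf a ∣ 2 ^ 1)
  have hA : IsPGroup 2 (zpowers a) := IsPGroup.of_card (by rw [Nat.card_zpowers, hm])
  have ha' : a⁻¹ = a := inv_eq_of_mul_eq_one_right (pow_two a ▸ ha)
  have hb' : b⁻¹ = b := inv_eq_of_mul_eq_one_right (pow_two b ▸ hb)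
  have hN : zpowers a ≤ normalizer (zpowers (a * b) : Set Γ) := by
    have hinv : MulAut.conj a (a * b) = (a * b)⁻¹ := by
      rw [MulAut.conj_apply, mul_inv_rev, ha', hb', ← mul_assoc, ← pow_two, ha, one_mul]
    rw [zpowers_le, mem_normalizer_iff_map_conj_eq, MonoidHom.map_zpowers, MonoidHom.coe_coe,
      hinv, zpowers_inv]
  refine (hZ.to_sup_of_normal_left' hA hN).to_le ((closure_le _).mpr
    (Set.insert_subset_iff.mpr ⟨mem_sup_right (mem_zpowers a), Set.singleton_subset_iff.mpr ?_⟩))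
  simpa using
    mul_mem (mem_sup_right (inv_mem (mem_zpowers a))) (mem_sup_left (mem_zpowers (a * b)))

theorem isPGroup_normalClosure_of_sq_eq_one [Finite Γ] {t : Γ} (ht : t ^ 2 = 1)
    (h : ∀ c : Γ, ∃ n, orderOf (t * (c * t * c⁻¹)) = 2 ^ n) : IsPGroup 2 (normalClosure {t}) := by
  refine isPGroup_closure_of_isPGroup_closure_pair
    (fun g d hd => Group.conj_mem_conjugatesOfSet hd) fun a ha b hb => ?_
  obtain ⟨x, rfl⟩ : ∃ x, x * t * x⁻¹ = a := by
    simpa [Group.mem_conjugatesOfSet_iff, isConj_iff] using ha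
  obtain ⟨y, rfl⟩ : ∃ y, y * t * y⁻¹ = b := by
    simpa [Group.mem_conjugatesOfSet_iff, isConj_iff] using hb
  have hconj : ∀ z : Γ, (z * t * z⁻¹) ^ 2 = 1 := fun z => by
    rw [← MulAut.conj_apply, ← map_pow, ht, map_one]
  refine isPGroup_closure_pair_of_sq_eq_one (hconj x) (hconj y) ?_
  obtain ⟨n, hn⟩ := h (x⁻¹ * y)
  have hxy : x * t * x⁻¹ * (y * t * y⁻¹) = MulAut.conj x (t * (x⁻¹ * y * t * (x⁻¹ * y)⁻¹)) := by
    rw [MulAut.conj_apply]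
    group
  exact ⟨n, by rw [hxy, MulEquiv.orderOf_eq, hn]⟩

end Involutions

open SemidirectProduct in
theorem isPGroup_normalClosure_range_mul_inv {G : Type*} [Group G] [Finite G] (τ : G ≃* G)
    (hτ : ∀ g, τ (τ g) = g) (hord : ∀ g, ∃ n, orderOf (τ g * g⁻¹) = 2 ^ n) :
    IsPGroup 2 (normalClosure (Set.range fun g => τ g * g⁻¹)) := by
  let S := zpowers (τ : MulAut G)
  have : Finite (G ⋊[S.subtype] S) := Finite.of_equiv _ equivProd.symm
  let t : G ⋊[S.subtype] S := inr ⟨τ, mem_zpowers _⟩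
  have ht : t ^ 2 = 1 := by
    rw [← map_pow, ← map_one inr]
    congr 1
    exact Subtype.ext (MulEquiv.ext hτ)
  have ht' : t⁻¹ = t := inv_eq_of_mul_eq_one_right (pow_two t ▸ ht)
  have hconj : ∀ c : G ⋊[S.subtype] S, t * (c * t * c⁻¹) = inl (τ c.left * c.left⁻¹) := by
    intro c
    have hcomm : inr c.right * t = t * inr c.right := by
      rw [← map_mul, ← map_mul]
      congr 1
      exact Std.Commutative.comm _ _
    have hτt : t * inl c.left * t⁻¹ = inl (τ c.left) := by
      show _ = inl (S.subtype ⟨τ, mem_zpowers _⟩ c.left)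
      rw [inl_aut, map_inv]
    calc t * (c * t * c⁻¹)
        = t * (inl c.left * (inr c.right * t * (inr c.right)⁻¹) * (inl c.left)⁻¹) := by
          conv_lhs => rw [← inl_left_mul_inr_right c]
          group
      _ = (t * inl c.left * t⁻¹) * (inl c.left)⁻¹ := by rw [hcomm, ht']; group
      _ = inl (τ c.left * c.left⁻¹) := by rw [hτt, map_mul, map_inv]
  have hP := isPGroup_normalClosure_of_sq_eq_one ht fun c => by
    rw [hconj, orderOf_injective inl inl_injective]
    exact hord c.left
  refine (hP.comap_of_injective inl inl_injective).to_le (normalClosure_le_normal ?_)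
  rintro _ ⟨g, rfl⟩
  have := hconj (inl g)
  rw [left_inl] at this
  rw [SetLike.mem_coe, mem_comap, ← this]
  have htN : t ∈ normalClosure {t} := subset_normalClosure (Set.mem_singleton t)
  exact mul_mem htN (normalClosure_normal.conj_mem t htN _)

theorem square_in_O2_and_image_involutions_general {G : Type*} [Group G] [Finite G]
    (H : Subgroup G) (K : Set G) (τ : G ≃* G)
    (hfolder : IsBX2PFolder H K τ)
    (N : Subgroup G) [N.Normal]
    (hNmax : ∀ M : Subgroup G, M.Normal → IsPGroup 2 M → M ≤ N) :
    (∀ k ∈ K, k ^ 2 ∈ N) ∧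
    (1 : G ⧸ N) ∈ (QuotientGroup.mk : G → G ⧸ N) '' K ∧
    (∀ x ∈ (QuotientGroup.mk : G → G ⧸ N) '' K, x ≠ 1 →
      x ^ 2 = 1 ∧ ∀ g : G ⧸ N, g * x * g⁻¹ ∈ (QuotientGroup.mk : G → G ⧸ N) '' K) := by
  obtain ⟨h1K, -, -, -, hord, -, hττ, -, hτK, hΛ⟩ := hfolder
  have hΛ1 : ∀ g, τ g * g⁻¹ ∈ K := fun g => by simpa using hΛ g⁻¹ 1 h1K
  have hτN : ∀ g, τ g * g⁻¹ ∈ N := fun g =>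
    hNmax _ normalClosure_normal
      (isPGroup_normalClosure_range_mul_inv τ hττ fun g => hord _ (hΛ1 g))
      (subset_normalClosure ⟨g, rfl⟩)
  have hsq : ∀ k ∈ K, k ^ 2 ∈ N := fun k hk => by
    simpa [hτK k hk, pow_two] using hτN k⁻¹
  have hmk : ∀ g, (τ g : G ⧸ N) = g := fun g =>
    QuotientGroup.eq_iff_div_mem.mpr (by simpa [div_eq_mul_inv] using hτN g)
  refine ⟨hsq, ⟨1, h1K, QuotientGroup.mk_one N⟩, ?_⟩
  rintro _ ⟨k, hk, rfl⟩ -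
  refine ⟨by rw [← QuotientGroup.mk_pow, QuotientGroup.eq_one_iff]; exact hsq k hk, fun g => ?_⟩
  obtain ⟨g, rfl⟩ := QuotientGroup.mk_surjective g
  refine ⟨(τ g⁻¹)⁻¹ * k * g⁻¹, hΛ g⁻¹ k hk, ?_⟩
  simp [hmk]

/-- Let `(G,H,K)` be a BX2P-folder and let `N = O₂(G)` be the
largest normal 2-subgroup of `G`. Then `k² ∈ N` for every `k ∈ K`, and in
`Ḡ = G/N` the image `K̄` of `K` contains `1`, each non-identity element of `K̄`
is an involution, and `K̄ \ {1}` is a union of `Ḡ`-conjugacy classes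
(i.e. `K̄ \ {1}` is closed under conjugation). -/
theorem square_in_O2_and_image_involutions {G : Type*} [Group G] [Finite G]
    (H : Subgroup G) (K : Set G) (τ : G ≃* G)
    (hfolder : IsBX2PFolder H K τ)
    (N : Subgroup G) [N.Normal] (hN2 : IsPGroup 2 N)
    (hNmax : ∀ M : Subgroup G, M.Normal → IsPGroup 2 M → M ≤ N) :
    (∀ k ∈ K, k ^ 2 ∈ N) ∧
    (1 : G ⧸ N) ∈ (QuotientGroup.mk : G → G ⧸ N) '' K ∧
    (∀ x ∈ (QuotientGroup.mk : G → G ⧸ N) '' K, x ≠ 1 →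
      x ^ 2 = 1 ∧ ∀ g : G ⧸ N, g * x * g⁻¹ ∈ (QuotientGroup.mk : G → G ⧸ N) '' K) :=
  square_in_O2_and_image_involutions_general H K τ hfolder N hNmax
end
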